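/- For all c₁, c₂, c₃, c₄ ∈ Z, the set Y₀c₁ ∩ Y₀y₀c₂ ∩ Y_{−1}c₃ ∩ Y_{−1}y₀c₄ ∩ Y₁ contains at most one element, where y₀ = g(1,0,0) and Y₀c₁ = {yc₁ : y ∈ Y₀}, etc. -/
import Mathlib


/-- The Heisenberg group `H₃(F)` of upper unitriangular 3×3 matrices over `F`,
recorded by the three free entries: `x` in position (1,2), `y` in position (2,3),
`z` in position (1,3). -/
@[ext]
structure Heis (F : Type*) where
  x : F
  y : F
  z : F
deriving DecidableEq

namespace Heis

variable {F : Type*} [Field F]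

/-- Multiplication corresponding to the matrix product. -/
instance : Group (Heis F) where
  mul a b := ⟨a.x + b.x, a.y + b.y, a.z + b.z + a.x * b.y⟩
  one := ⟨0, 0, 0⟩
  inv a := ⟨-a.x, -a.y, -a.z + a.x * a.y⟩
  mul_assoc a b c := Heis.ext
    (show a.x + b.x + c.x = a.x + (b.x + c.x) by ring)
    (show a.y + b.y + c.y = a.y + (b.y + c.y) by ring)
    (show a.z + b.z + a.x * b.y + c.z + (a.x + b.x) * c.y
        = a.z + (b.z + c.z + b.x * c.y) + a.x * (b.y + c.y) by ring)
  one_mul a := Heis.ext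
    (show (0 : F) + a.x = a.x by ring)
    (show (0 : F) + a.y = a.y by ring)
    (show (0 : F) + a.z + 0 * a.y = a.z by ring)
  mul_one a := Heis.ext
    (show a.x + 0 = a.x by ring)
    (show a.y + 0 = a.y by ring)
    (show a.z + 0 + a.x * 0 = a.z by ring)
  inv_mul_cancel a := Heis.ext
    (show -a.x + a.x = 0 by ring)
    (show -a.y + a.y = 0 by ring)
    (show -a.z + a.x * a.y + a.z + -a.x * a.y = 0 by ring)

instance [Fintype F] : Fintype (Heis F) :=
  Fintype.ofEquiv (F × F × F)
    ⟨fun p => ⟨p.1, p.2.1, p.2.2⟩, fun a => (a.x, a.y, a.z), fun _ => rfl, fun _ => rfl⟩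

end Heis

/-- The element `g(x,y,z)` of the Heisenberg group. -/
def gElt {F : Type*} (x y z : F) : Heis F := ⟨x, y, z⟩

/-- The center `Z = {g(0,0,z) : z ∈ F}` of the Heisenberg group, as a set. -/
def Zset (F : Type*) [Field F] : Set (Heis F) := {g : Heis F | g.x = 0 ∧ g.y = 0}

/-- The center `Z` as a subgroup of the Heisenberg group. -/
def Zsub (F : Type*) [Field F] : Subgroup (Heis F) where
  carrier := Zset F
  mul_mem' := fun {a b} ha hb =>
    ⟨show a.x + b.x = 0 by rw [ha.1, hb.1, add_zero],
     show a.y + b.y = 0 by rw [ha.2, hb.2, add_zero]⟩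
  one_mem' := ⟨rfl, rfl⟩
  inv_mem' := fun {a} ha =>
    ⟨show -a.x = 0 by rw [ha.1, neg_zero],
     show -a.y = 0 by rw [ha.2, neg_zero]⟩

/-- `γ_i(α,β) = αβ/2 + (α² − εβ²)i`. -/
def gam {F : Type*} [Field F] (ε i α β : F) : F := α * β / 2 + (α ^ 2 - ε * β ^ 2) * i

/-- `Y_i = {g(α, β, γ_i(α,β)) : (α,β) ≠ (0,0)}`. -/
def Yset {F : Type*} [Field F] (ε i : F) : Set (Heis F) :=
  {g : Heis F | ∃ α β : F, (α, β) ≠ (0, 0) ∧ g = gElt α β (gam ε i α β)}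

/-- `X_i = Y_i ∪ {e}`. -/
def Xset {F : Type*} [Field F] (ε i : F) : Set (Heis F) := Yset ε i ∪ {1}

/-- The map `ρ(M) : G → G` attached to the matrix `M = [[α,β],[εβ,α]]`. -/
def rho {F : Type*} [Field F] (ε α β : F) : Heis F → Heis F := fun g =>
  gElt (α * g.x + ε * β * g.y) (β * g.x + α * g.y)
    (α * β * (g.x ^ 2 / 2 + ε * g.y ^ 2 / 2) + ε * β ^ 2 * g.x * g.y
      + (α ^ 2 - ε * β ^ 2) * g.z)

/-- `K = {ρ(M) : M = [[α,β],[εβ,α]], (α,β) ≠ (0,0)}`, as a set of maps `G → G`. -/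
def Kset {F : Type*} [Field F] (ε : F) : Set (Heis F → Heis F) :=
  {f | ∃ α β : F, (α, β) ≠ (0, 0) ∧ f = rho ε α β}

/-- The family of sets `{e}`, `Z \ {e}`, `Y_i` for `i ∈ F`. -/
def SFam {F : Type*} [Field F] (ε : F) : Set (Set (Heis F)) :=
  insert {1} (insert (Zset F \ {1}) {S | ∃ i : F, S = Yset ε i})

/-- `f` preserves each of the basic sets `{e}`, `Z \ {e}`, `Y_i`:
`hg⁻¹ ∈ S ↔ f(h)f(g)⁻¹ ∈ S`. -/
def Preserves {F : Type*} [Field F] (ε : F) (f : Heis F → Heis F) : Prop :=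
  ∀ S ∈ SFam ε, ∀ g h : Heis F, h * g⁻¹ ∈ S ↔ f h * (f g)⁻¹ ∈ S

/-- The set of permutations of `G` of the form `x ↦ σ(x)·c` with `σ ∈ K`, `c ∈ G`. -/
def Aset {F : Type*} [Field F] (ε : F) : Set (Equiv.Perm (Heis F)) :=
  {f | ∃ σ ∈ Kset ε, ∃ c : Heis F, ∀ x : Heis F, f x = σ x * c}

/-- The operation `ψ` on `F ∪ {∞}`, with `∞` encoded as `none`. -/
def psi {F : Type*} [Field F] [DecidableEq F] (ε : F) : Option F → Option F → Option F
  | none, j => j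
  | some i, none => some i
  | some i, some j => if i + j = 0 then none else some ((i * j + ε / 16) / (i + j))

/-- `Y_k` for `k ∈ F ∪ {∞}`, where `Y_∞ = Z \ {e}`. -/
def YInf {F : Type*} [Field F] (ε : F) : Option F → Set (Heis F)
  | some i => Yset ε i
  | none => Zset F \ {1}


section Aux

variable {F : Type*} [Field F]

lemma mem_mul_center {ε i : F} {c u : Heis F} (hc : c ∈ Zset F)
    (hu : u ∈ (fun v => v * c) '' Yset ε i) :
    u.z = gam ε i u.x u.y + c.z := by
  obtain ⟨v, ⟨α, β, hne, rfl⟩, rfl⟩ := hu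
  obtain ⟨hx, hy⟩ := hc
  show gam ε i α β + c.z + α * c.y = gam ε i (α + c.x) (β + c.y) + c.z
  rw [hx, hy]; ring_nf

lemma mem_mul_y0_center {ε i : F} {c u : Heis F} (hc : c ∈ Zset F)
    (hu : u ∈ (fun v => v * gElt 1 0 0 * c) '' Yset ε i) :
    u.z = gam ε i (u.x - 1) u.y + c.z := by
  obtain ⟨v, ⟨α, β, hne, rfl⟩, rfl⟩ := hu
  obtain ⟨hx, hy⟩ := hc
  show gam ε i α β + (0:F) + α * 0 + c.z + (α + 1) * c.y
      = gam ε i (α + 1 + c.x - 1) (β + 0 + c.y) + c.z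
  rw [hx, hy]; ring_nf

lemma mem_Yset_z {ε i : F} {u : Heis F} (hu : u ∈ Yset ε i) :
    u.z = gam ε i u.x u.y := by
  obtain ⟨α, β, hne, rfl⟩ := hu; rfl

lemma two_ne_zero_of_odd_card {F : Type*} [Field F] [Fintype F]
    (hodd : Odd (Fintype.card F)) : (2 : F) ≠ 0 := by
  intro h
  have hd : ringChar F ∣ 2 := by
    have : ((2 : ℕ) : F) = 0 := by exact_mod_cast h
    exact ringChar.dvd this
  have h1 : ringChar F ≠ 1 := CharP.ringChar_ne_one
  rcases (Nat.dvd_prime Nat.prime_two).mp hd with h | h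
  · exact h1 h
  · have := FiniteField.even_card_of_char_two h
    rw [Nat.odd_iff] at hodd
    omega

end Aux

/-- For all `c₁, c₂, c₃, c₄ ∈ Z`, the set
`Y₀c₁ ∩ Y₀y₀c₂ ∩ Y_{−1}c₃ ∩ Y_{−1}y₀c₄ ∩ Y₁` contains at most one element, where
`y₀ = g(1,0,0)`. -/
theorem statement_11 {F : Type*} [Field F] [Fintype F]
    (hodd : Odd (Fintype.card F)) (ε : F) (hε : ¬IsSquare ε)
    (c1 c2 c3 c4 : Heis F) (hc1 : c1 ∈ Zset F) (hc2 : c2 ∈ Zset F)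
    (hc3 : c3 ∈ Zset F) (hc4 : c4 ∈ Zset F) :
    Set.Subsingleton
      ((fun u => u * c1) '' Yset ε 0 ∩
        (fun u => u * gElt 1 0 0 * c2) '' Yset ε 0 ∩
        (fun u => u * c3) '' Yset ε (-1) ∩
        (fun u => u * gElt 1 0 0 * c4) '' Yset ε (-1) ∩
        Yset ε 1) := fun a ha b hb => by
  have h2 : (2 : F) ≠ 0 := two_ne_zero_of_odd_card hodd
  obtain ⟨⟨⟨⟨ha1, ha2⟩, ha3⟩, ha4⟩, ha5⟩ := ha
  obtain ⟨⟨⟨⟨hb1, hb2⟩, hb3⟩, hb4⟩, hb5⟩ := hb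
  have ea1 := mem_mul_center hc1 ha1
  have ea2 := mem_mul_y0_center hc2 ha2
  have ea3 := mem_mul_center hc3 ha3
  have ea4 := mem_mul_y0_center hc4 ha4
  have ea5 := mem_Yset_z ha5
  have eb1 := mem_mul_center hc1 hb1
  have eb2 := mem_mul_y0_center hc2 hb2
  have eb3 := mem_mul_center hc3 hb3
  have eb4 := mem_mul_y0_center hc4 hb4
  have eb5 := mem_Yset_z hb5
  simp only [gam] at ea1 ea2 ea3 ea4 ea5 eb1 eb2 eb3 eb4 eb5
  field_simp at ea1 ea2 ea3 ea4 ea5 eb1 eb2 eb3 eb4 eb5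
  -- y is determined
  have hya : a.y = 2 * c2.z - 2 * c1.z := by linear_combination ea2 - ea1
  have hyb : b.y = 2 * c2.z - 2 * c1.z := by linear_combination eb2 - eb1
  have hy : a.y = b.y := hya.trans hyb.symm
  -- x is determined
  have hxa : (2 * 2) * a.x = a.y + 2 + 2 * c3.z - 2 * c4.z := by
    linear_combination ea3 - ea4
  have hxb : (2 * 2) * b.x = b.y + 2 + 2 * c3.z - 2 * c4.z := by
    linear_combination eb3 - eb4
  rw [hy] at hxa
  have hx : a.x = b.x := mul_left_cancel₀ (mul_ne_zero h2 h2) (hxa.trans hxb.symm)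
  -- z is determined
  rw [hx, hy] at ea5
  have hz2 : 2 * a.z = 2 * b.z := by linear_combination ea5 - eb5
  exact Heis.ext hx hy (mul_left_cancel₀ h2 hz2)
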